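/- If a graph G is obtained from H by adding a path P whose internal vertices are new and whose two endpoints are attached each to one vertex of H (i.e., G is H plus a new path with its two end-edges joining two vertices of H, with the edge between those two H-vertices possibly removed), then lrw(G) ≤ lrw(H) + 2. -/

import Mathlib

/-- Cut-rank of a vertex subset `X`: the GF(2) rank of the submatrix of the
adjacency matrix `A` with rows indexed by `X` and columns by its complement. -/
noncomputable def cutRank {V : Type*} [Fintype V] [DecidableEq V]
    (A : Matrix V V (ZMod 2)) (X : Finset V) : ℕ :=
  (A.submatrix (fun x : {x : V // x ∈ X} => (x : V))
               (fun y : {y : V // y ∉ X} => (y : V))).rank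

/-- The width of a linear ordering (given by a bijection `Fin n ≃ V`):
the maximum cut-rank over all prefixes. -/
noncomputable def orderWidth {V : Type*} [Fintype V] [DecidableEq V]
    (A : Matrix V V (ZMod 2)) (e : Fin (Fintype.card V) ≃ V) : ℕ :=
  Finset.sup (Finset.range (Fintype.card V)) fun i =>
    cutRank A (Finset.univ.filter fun v => ((e.symm v : Fin (Fintype.card V)) : ℕ) < i)

/-- Linear rank-width: the minimum width over all linear orderings. -/
noncomputable def lrw {V : Type*} [Fintype V] [DecidableEq V]
    (A : Matrix V V (ZMod 2)) : ℕ :=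
  ⨅ e : Fin (Fintype.card V) ≃ V, orderWidth A e

/-- The GF(2) adjacency matrix of a simple graph. -/
def adjMat {V : Type*} [Fintype V] [DecidableEq V]
    (G : SimpleGraph V) [DecidableRel G.Adj] : Matrix V V (ZMod 2) :=
  Matrix.of fun u v => if G.Adj u v then 1 else 0

/-! Order `G` by an optimal linear ordering of `H` followed by the path vertices in path order.
A prefix inside `V(H)` sees the cut matrix of `H` changed only in the rows of `x` and `y` (the
path columns are supported on those two rows as well), so its cut-rank grows by at most 2.
A prefix containing `V(H)` and the first `t ≥ 1` path vertices has nonzero cut entries only in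
the rows of `y` and of the `t`-th path vertex, so its cut-rank is at most 2. -/

open Finset Matrix

namespace Matrix

variable {m n n' R : Type*} [Fintype n] [Field R]

theorem rank_add_le (A B : Matrix m n R) : (A + B).rank ≤ A.rank + B.rank := by
  have hlin : (A + B).mulVecLin = A.mulVecLin + B.mulVecLin :=
    LinearMap.ext fun v => add_mulVec A B v
  rw [rank, hlin]
  exact (Submodule.finrank_mono (LinearMap.range_add_le _ _)).trans
    (Submodule.finrank_add_le_finrank_add_finrank _ _)

theorem rank_le_rank_of_col_mem_span [Fintype m] [Fintype n'] (A : Matrix m n R)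
    (B : Matrix m n' R) (h : ∀ j, A.col j ∈ Submodule.span R (Set.range B.col)) :
    A.rank ≤ B.rank := by
  rw [rank_eq_finrank_span_cols, rank_eq_finrank_span_cols]
  exact Submodule.finrank_mono (Submodule.span_le.2 (Set.range_subset_iff.2 h))

end Matrix

section CutRank

variable {W : Type*} [Fintype W] [DecidableEq W]

theorem cutRank_univ (A : Matrix W W (ZMod 2)) : cutRank A univ = 0 :=
  Nat.le_zero.1 <| (rank_le_card_width _).trans_eq <| by simp

theorem cutRank_le_cutRank_add_card {A B : Matrix W W (ZMod 2)} {P : Finset W} (S : Finset W)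
    (h : ∀ w ∈ P, w ∉ S → ∀ j ∉ P, A w j = B w j) :
    cutRank A P ≤ cutRank B P + #S := by
  set rows := fun w : {w // w ∈ P} => (w : W)
  set cols := fun j : {j // j ∉ P} => (j : W)
  have hsplit : A.submatrix rows cols = B.submatrix rows cols + (A - B).submatrix rows cols := by
    ext; simp
  have hdiff : ((A - B).submatrix rows cols).rank ≤ #S := by
    refine (rank_le_card_of_support_subset _ (S.subtype (· ∈ P)) ?_).trans
      ((card_subtype _ _).trans_le (card_filter_le _ _))
    intro w hw
    by_contra hwS
    refine hw (funext fun j => ?_)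
    simpa [rows, cols, sub_eq_zero] using h w w.2 (by simpa using hwS) j j.2
  calc cutRank A P = (B.submatrix rows cols + (A - B).submatrix rows cols).rank := by
        rw [← hsplit]; rfl
    _ ≤ cutRank B P + #S := (rank_add_le _ _).trans (Nat.add_le_add_left hdiff _)

theorem cutRank_fromBlocks_zero_le {K : Type*} [Fintype K] [DecidableEq K]
    (A : Matrix W W (ZMod 2)) (X : Finset W) :
    cutRank (fromBlocks A 0 0 0 : Matrix (W ⊕ K) (W ⊕ K) (ZMod 2)) (X.disjSum ∅) ≤
      cutRank A X := by
  let toInl : {u // u ∈ X} ≃ {w // w ∈ X.disjSum (∅ : Finset K)} :=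
    Equiv.ofBijective (fun u => ⟨Sum.inl u, inl_mem_disjSum.2 u.2⟩)
      ⟨fun u v huv => by simpa using huv, by
        rintro ⟨_ | _, hw⟩
        · exact ⟨⟨_, inl_mem_disjSum.1 hw⟩, rfl⟩
        · simp at hw⟩
  unfold cutRank
  rw [← rank_submatrix _ toInl (Equiv.refl _)]
  refine rank_le_rank_of_col_mem_span _ _ fun ⟨j, hj⟩ => ?_
  cases j with
  | inl v =>
    exact Submodule.subset_span ⟨⟨v, fun hv => hj (inl_mem_disjSum.2 hv)⟩, rfl⟩
  | inr p =>
    convert Submodule.zero_mem _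
    ext u
    rfl

end CutRank

section LinearOrdering

variable {V K : Type*} [Fintype V] [Fintype K]

def orderPrefix (e : Fin (Fintype.card V) ≃ V) (i : ℕ) : Finset V :=
  univ.filter fun v => (e.symm v : ℕ) < i

theorem orderPrefix_zero (e : Fin (Fintype.card V) ≃ V) : orderPrefix e 0 = ∅ := by
  simp [orderPrefix]

theorem orderPrefix_of_card_le (e : Fin (Fintype.card V) ≃ V) {i : ℕ}
    (hi : Fintype.card V ≤ i) : orderPrefix e i = univ := by
  ext v
  simpa [orderPrefix] using (e.symm v).isLt.trans_le hi

def appendOrder (e : Fin (Fintype.card V) ≃ V) (f : Fin (Fintype.card K) ≃ K) :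
    Fin (Fintype.card (V ⊕ K)) ≃ V ⊕ K :=
  (finCongr Fintype.card_sum).trans (finSumFinEquiv.symm.trans (e.sumCongr f))

theorem orderPrefix_appendOrder (e : Fin (Fintype.card V) ≃ V) (f : Fin (Fintype.card K) ≃ K)
    (i : ℕ) :
    orderPrefix (appendOrder e f) i =
      (orderPrefix e i).disjSum (orderPrefix f (i - Fintype.card V)) := by
  ext (v | p)
  · simp [orderPrefix, appendOrder, finSumFinEquiv_apply_left]
  · simp [orderPrefix, appendOrder, finSumFinEquiv_apply_right]
    omega

variable [DecidableEq V] (A : Matrix V V (ZMod 2))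

theorem orderWidth_le {e : Fin (Fintype.card V) ≃ V} {w : ℕ}
    (h : ∀ i < Fintype.card V, cutRank A (orderPrefix e i) ≤ w) : orderWidth A e ≤ w :=
  Finset.sup_le fun i hi => h i (mem_range.1 hi)

theorem cutRank_orderPrefix_le_orderWidth (e : Fin (Fintype.card V) ≃ V) {i : ℕ}
    (hi : i ≤ Fintype.card V) : cutRank A (orderPrefix e i) ≤ orderWidth A e := by
  rcases hi.lt_or_eq with hi | rfl
  · exact le_sup (f := fun i => cutRank A (orderPrefix e i)) (mem_range.2 hi)
  · rw [orderPrefix_of_card_le e le_rfl, cutRank_univ]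
    exact Nat.zero_le _

theorem lrw_le_orderWidth (e : Fin (Fintype.card V) ≃ V) : lrw A ≤ orderWidth A e :=
  ciInf_le (OrderBot.bddBelow _) e

theorem exists_orderWidth_eq_lrw : ∃ e : Fin (Fintype.card V) ≃ V, orderWidth A e = lrw A :=
  have : Nonempty (Fin (Fintype.card V) ≃ V) := ⟨(Fintype.equivFin V).symm⟩
  exists_eq_ciInf_of_finite

end LinearOrdering

section PathExtension

variable {V : Type*} [Fintype V] [DecidableEq V] {k : ℕ}
  {G : SimpleGraph (V ⊕ Fin k)} [DecidableRel G.Adj] {x y : V}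

theorem cutRank_disjSum_empty_le_cutRank_add_two (H : SimpleGraph V) [DecidableRel H.Adj]
    (h1 : ∀ u v : V, s(u, v) ≠ s(x, y) → (G.Adj (Sum.inl u) (Sum.inl v) ↔ H.Adj u v))
    (h3 : ∀ (u : V) (i : Fin k), G.Adj (Sum.inl u) (Sum.inr i) ↔
      ((u = x ∧ (i : ℕ) = 0) ∨ (u = y ∧ (i : ℕ) = k - 1)))
    (X : Finset V) :
    cutRank (adjMat G) (X.disjSum ∅) ≤ cutRank (adjMat H) X + 2 := by
  calc cutRank (adjMat G) (X.disjSum ∅)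
      ≤ cutRank (fromBlocks (adjMat H) 0 0 0) (X.disjSum ∅) + #{Sum.inl x, Sum.inl y} :=
        cutRank_le_cutRank_add_card _ ?_
    _ ≤ cutRank (adjMat H) X + 2 := add_le_add (cutRank_fromBlocks_zero_le _ _) card_le_two
  rintro (u | p) hw hS j -
  · simp only [mem_insert, mem_singleton, Sum.inl.injEq, not_or] at hS
    rcases j with v | q
    · have huv : s(u, v) ≠ s(x, y) := by
        rw [Ne, Sym2.eq_iff]
        tauto
      simp [adjMat, h1 u v huv]
    · simp [adjMat, h3, hS.1, hS.2]
  · simp at hw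

theorem cutRank_univ_disjSum_le_two
    (h2 : ∀ i j : Fin k, G.Adj (Sum.inr i) (Sum.inr j) ↔
      ((i : ℕ) + 1 = (j : ℕ) ∨ (j : ℕ) + 1 = (i : ℕ)))
    (h3 : ∀ (u : V) (i : Fin k), G.Adj (Sum.inl u) (Sum.inr i) ↔
      ((u = x ∧ (i : ℕ) = 0) ∨ (u = y ∧ (i : ℕ) = k - 1)))
    {t : ℕ} (ht : 0 < t) (htk : t ≤ k) :
    cutRank (adjMat G) (univ.disjSum (univ.filter fun p : Fin k => (p : ℕ) < t)) ≤ 2 := by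
  calc cutRank (adjMat G) (univ.disjSum (univ.filter fun p : Fin k => (p : ℕ) < t))
      ≤ cutRank 0 (univ.disjSum (univ.filter fun p : Fin k => (p : ℕ) < t)) +
          #{Sum.inr ⟨t - 1, by omega⟩, Sum.inl y} :=
        cutRank_le_cutRank_add_card _ ?_
    _ ≤ 2 := by simp [cutRank]
  rintro (u | p) hw hS (v | q) hj
  · simp at hj
  · simp only [inr_mem_disjSum, mem_filter, mem_univ, true_and, not_lt] at hj
    simp only [mem_insert, mem_singleton, Sum.inl.injEq, reduceCtorEq, false_or] at hS
    simp [adjMat, h3, hS]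
    omega
  · simp at hj
  · simp only [inr_mem_disjSum, mem_filter, mem_univ, true_and, not_lt] at hw hj
    simp only [mem_insert, mem_singleton, Sum.inr.injEq, Fin.ext_iff, reduceCtorEq, or_false] at hS
    simp [adjMat, h2]
    omega

end PathExtension

theorem stmt12_general {V : Type*} [Fintype V] [DecidableEq V] (k : ℕ)
    (H : SimpleGraph V) [DecidableRel H.Adj]
    (G : SimpleGraph (V ⊕ Fin k)) [DecidableRel G.Adj]
    (x y : V)
    (h1 : ∀ u v : V, s(u, v) ≠ s(x, y) →
      (G.Adj (Sum.inl u) (Sum.inl v) ↔ H.Adj u v))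
    (h2 : ∀ i j : Fin k, G.Adj (Sum.inr i) (Sum.inr j) ↔
      ((i : ℕ) + 1 = (j : ℕ) ∨ (j : ℕ) + 1 = (i : ℕ)))
    (h3 : ∀ (u : V) (i : Fin k), G.Adj (Sum.inl u) (Sum.inr i) ↔
      ((u = x ∧ (i : ℕ) = 0) ∨ (u = y ∧ (i : ℕ) = k - 1))) :
    lrw (adjMat G) ≤ lrw (adjMat H) + 2 := by
  obtain ⟨e, he⟩ := exists_orderWidth_eq_lrw (adjMat H)
  let path : Fin (Fintype.card (Fin k)) ≃ Fin k := finCongr (Fintype.card_fin k)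
  refine (lrw_le_orderWidth _ (appendOrder e path)).trans (orderWidth_le _ fun i hi => ?_)
  rw [orderPrefix_appendOrder]
  rcases le_or_gt i (Fintype.card V) with hiV | hiV
  · rw [Nat.sub_eq_zero_of_le hiV, orderPrefix_zero, ← he]
    exact (cutRank_disjSum_empty_le_cutRank_add_two H h1 h3 _).trans
      (Nat.add_le_add_right (cutRank_orderPrefix_le_orderWidth _ e hiV) 2)
  · have hpath : orderPrefix path (i - Fintype.card V) =
        univ.filter fun p : Fin k => (p : ℕ) < i - Fintype.card V := by
      ext; simp [orderPrefix, path]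
    rw [Fintype.card_sum, Fintype.card_fin] at hi
    rw [orderPrefix_of_card_le e hiV.le, hpath]
    exact (cutRank_univ_disjSum_le_two h2 h3 (by omega) (by omega)).trans (Nat.le_add_left _ _)

/-- If `G` is obtained from `H` by adding a path of `k` new
vertices, whose first vertex is joined to `x ∈ V(H)` and whose last vertex is
joined to `y ∈ V(H)` (the edge between `x` and `y` possibly removed), then
`lrw(G) ≤ lrw(H) + 2`. -/
theorem stmt12 {V : Type*} [Fintype V] [DecidableEq V] (k : ℕ) (hk : 1 ≤ k)
    (H : SimpleGraph V) [DecidableRel H.Adj]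
    (G : SimpleGraph (V ⊕ Fin k)) [DecidableRel G.Adj]
    (x y : V) (hxy : x ≠ y)
    (h1 : ∀ u v : V, s(u, v) ≠ s(x, y) →
      (G.Adj (Sum.inl u) (Sum.inl v) ↔ H.Adj u v))
    (h2 : ∀ i j : Fin k, G.Adj (Sum.inr i) (Sum.inr j) ↔
      ((i : ℕ) + 1 = (j : ℕ) ∨ (j : ℕ) + 1 = (i : ℕ)))
    (h3 : ∀ (u : V) (i : Fin k), G.Adj (Sum.inl u) (Sum.inr i) ↔
      ((u = x ∧ (i : ℕ) = 0) ∨ (u = y ∧ (i : ℕ) = k - 1))) :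
    lrw (adjMat G) ≤ lrw (adjMat H) + 2 :=
  stmt12_general k H G x y h1 h2 h3
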